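/- Let P be a possibilistic positive clausal program without possibilistic constraint rules (no rule has head ⊥). Then P*_w, the least fixpoint of the immediate consequence operator T^w_P obtained by iterating from the valuation mapping every clause to 0, is a possibilistic answer set of P. -/
import Mathlib


open Classical

namespace PASP

/-- An interpretation assigns a truth value to each atom. -/
abbrev Interp (A : Type) := A → Bool

/-- A literal is an atom with a sign (`true` = positive, `false` = classical negation). -/
abbrev Lit (A : Type) := A × Bool

/-- A possibility distribution on interpretations. -/
abbrev PossDist (A : Type) := Interp A → ℝ

variable {A : Type}

def litSat (ω : Interp A) (l : Lit A) : Prop := ω l.1 = l.2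

def IsPossDist (π : PossDist A) : Prop := ∀ ω, 0 ≤ π ω ∧ π ω ≤ 1

noncomputable def poss (π : PossDist A) (p : Interp A → Prop) : ℝ :=
  sSup {x | ∃ ω, p ω ∧ π ω = x}

noncomputable def nec (π : PossDist A) (p : Interp A → Prop) : ℝ :=
  1 - poss π fun ω => ¬ p ω

noncomputable def necLit (π : PossDist A) (l : Lit A) : ℝ :=
  nec π fun ω => litSat ω l

def Consistent (M : Set (Lit A)) : Prop :=
  ∀ a : A, ¬ ((a, true) ∈ M ∧ (a, false) ∈ M)

def MinSpecific (S : Set (PossDist A)) (π : PossDist A) : Prop :=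
  π ∈ S ∧ ∀ π' ∈ S, π ≤ π' → π' = π


/-- A clause is a finite disjunction of literals. -/
abbrev Clause (A : Type) := Finset (Lit A)

/-- Satisfaction of a clause by an interpretation. -/
def clauseSat (ω : Interp A) (e : Clause A) : Prop := ∃ l ∈ e, litSat ω l

/-- The necessity of a clause. -/
noncomputable def necCl (π : PossDist A) (e : Clause A) : ℝ :=
  nec π fun ω => clauseSat ω e

/-- Propositional entailment of a clause by a set of clauses. -/
def entails (S : Set (Clause A)) (e : Clause A) : Prop :=
  ∀ ω : Interp A, (∀ e' ∈ S, clauseSat ω e') → clauseSat ω e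

/-- A possibilistic positive clausal rule `(e₀ ← e₁,…,e_m, λ)`. -/
structure PClausalRule (A : Type) where
  head : Clause A
  body : Finset (Clause A)
  wt : ℝ

/-- The head clauses of a possibilistic positive clausal program. -/
def headsOfP (P : Set (PClausalRule A)) : Set (Clause A) := {e | ∃ r ∈ P, r.head = e}

/-- `min(N(e₁),…,N(e_m))`, the minimum of the empty list being 1. -/
noncomputable def minBodyCl (π : PossDist A) (B : Finset (Clause A)) : ℝ :=
  sInf (insert 1 (necCl π '' (↑B : Set (Clause A))))

/-- The weak constraint `N(e₀) ≥ min(N(e₁),…,N(e_m), λ)` of a possibilistic positive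
clausal rule. -/
def weakConstraint (π : PossDist A) (r : PClausalRule A) : Prop :=
  min (minBodyCl π r.body) r.wt ≤ necCl π r.head

/-- The possibility distributions satisfying the weak constraints of all rules of `P`. -/
def weakModels (P : Set (PClausalRule A)) : Set (PossDist A) :=
  {π | IsPossDist π ∧ ∀ r ∈ P, weakConstraint π r}

/-- The possibility distributions satisfying `N(e) ≥ V(e)` for every head clause `e`
of the program (with heads `H`); a valuation `V` is identified with the greatest
(least specific) element of this set. -/
def valModels (H : Set (Clause A)) (V : Clause A → ℝ) : Set (PossDist A) :=
  {π | IsPossDist π ∧ ∀ e ∈ H, V e ≤ necCl π e}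

/-- A valuation maps every clause into `[0,1]`. -/
def IsValCl (V : Clause A → ℝ) : Prop := ∀ e, 0 ≤ V e ∧ V e ≤ 1

/-- The immediate consequence operator `T^w_P` for possibilistic positive clausal
programs: `T^w_P(V)(e₀) = max{λ ∈ [0,1] : (e₀ ← e₁,…,e_m) ∈ P_λ and V^λ ⊨ e_i ∀i}`,
with `max ∅ = 0` and `V^λ = {e ∈ heads(P) : V(e) ≥ λ}`. -/
noncomputable def Tw (P : Set (PClausalRule A)) (V : Clause A → ℝ) : Clause A → ℝ :=
  fun e₀ => sSup {lam | lam ∈ Set.Icc (0:ℝ) 1 ∧ ∃ r ∈ P, lam ≤ r.wt ∧ r.head = e₀ ∧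
    ∀ e ∈ r.body, entails {e' | e' ∈ headsOfP P ∧ lam ≤ V e'} e}


section Aux

variable {A : Type}

lemma poss_nonneg (π : PossDist A) (hπ : IsPossDist π) (p : Interp A → Prop) :
    0 ≤ poss π p :=
  Real.sSup_nonneg (by rintro x ⟨ω, _, rfl⟩; exact (hπ ω).1)

lemma poss_le_one (π : PossDist A) (hπ : IsPossDist π) (p : Interp A → Prop) :
    poss π p ≤ 1 :=
  Real.sSup_le (by rintro x ⟨ω, _, rfl⟩; exact (hπ ω).2) one_pos.le

lemma le_poss (π : PossDist A) (hπ : IsPossDist π) {p : Interp A → Prop} {ω : Interp A}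
    (h : p ω) : π ω ≤ poss π p :=
  le_csSup ⟨1, by rintro x ⟨ω', _, rfl⟩; exact (hπ ω').2⟩ ⟨ω, h, rfl⟩

lemma necCl_nonneg (π : PossDist A) (hπ : IsPossDist π) (e : Clause A) :
    0 ≤ necCl π e := by
  have := poss_le_one π hπ (fun ω => ¬ clauseSat ω e)
  unfold necCl nec; linarith

lemma necCl_le_one (π : PossDist A) (hπ : IsPossDist π) (e : Clause A) :
    necCl π e ≤ 1 := by
  have := poss_nonneg π hπ (fun ω => ¬ clauseSat ω e)
  unfold necCl nec; linarith

/-- If all clauses of `T` have necessity at least `lam` and `T ⊨ e`, then `e` has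
necessity at least `lam`. -/
lemma le_nec_of_entails (π : PossDist A) (hπ : IsPossDist π) (T : Set (Clause A))
    (e : Clause A) (hT : entails T e) (lam : ℝ) (hlam : lam ≤ 1)
    (h : ∀ e' ∈ T, lam ≤ necCl π e') : lam ≤ necCl π e := by
  have hposs : poss π (fun ω => ¬ clauseSat ω e) ≤ 1 - lam := by
    apply Real.sSup_le _ (by linarith)
    rintro x ⟨ω, hω, rfl⟩
    by_cases hall : ∀ e' ∈ T, clauseSat ω e'
    · exact absurd (hT ω hall) hω
    · push_neg at hall
      obtain ⟨e', he'T, he'⟩ := hall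
      have h1 : π ω ≤ poss π (fun ω => ¬ clauseSat ω e') := le_poss π hπ he'
      have h2 := h e' he'T
      unfold necCl nec at h2
      linarith
  unfold necCl nec; linarith

/-- The explicit greatest element of `valModels H E`. -/
noncomputable def pi0 (H : Set (Clause A)) (E : Clause A → ℝ) : PossDist A :=
  fun ω => sInf (insert 1 ((fun e => 1 - E e) '' {e | e ∈ H ∧ ¬ clauseSat ω e}))

section Pi0

variable [Fintype A] (H : Set (Clause A)) (E : Clause A → ℝ)

lemma pi0_set_finite (ω : Interp A) :
    (insert 1 ((fun e => 1 - E e) '' {e | e ∈ H ∧ ¬ clauseSat ω e}) : Set ℝ).Finite :=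
  Set.Finite.insert 1 ((Set.toFinite _).image _)

lemma pi0_mem (ω : Interp A) :
    pi0 H E ω ∈ insert 1 ((fun e => 1 - E e) '' {e | e ∈ H ∧ ¬ clauseSat ω e}) :=
  Set.Nonempty.csInf_mem ⟨1, Set.mem_insert 1 _⟩ (pi0_set_finite H E ω)

lemma pi0_le_one (ω : Interp A) : pi0 H E ω ≤ 1 :=
  csInf_le (pi0_set_finite H E ω).bddBelow (Set.mem_insert 1 _)

lemma pi0_poss (hE : IsValCl E) : IsPossDist (pi0 H E) := by
  intro ω
  refine ⟨?_, pi0_le_one H E ω⟩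
  rcases pi0_mem H E ω with h | ⟨e, _, h⟩
  · rw [h]; exact zero_le_one
  · rw [← h]; show (0:ℝ) ≤ 1 - E e; have := (hE e).2; linarith

lemma pi0_le (hE : IsValCl E) {ω : Interp A} {e : Clause A} (heH : e ∈ H)
    (hne : ¬ clauseSat ω e) : pi0 H E ω ≤ 1 - E e :=
  csInf_le (pi0_set_finite H E ω).bddBelow
    (Set.mem_insert_of_mem _ ⟨e, ⟨heH, hne⟩, rfl⟩)

lemma pi0_mem_valModels (hE : IsValCl E) : pi0 H E ∈ valModels H E := by
  refine ⟨pi0_poss H E hE, fun e heH => ?_⟩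
  have hposs : poss (pi0 H E) (fun ω => ¬ clauseSat ω e) ≤ 1 - E e := by
    apply Real.sSup_le
    · rintro x ⟨ω, hω, rfl⟩
      exact pi0_le H E hE heH hω
    · have := (hE e).2; linarith
  unfold necCl nec; linarith

lemma pi0_ub (π' : PossDist A) (hπ' : π' ∈ valModels H E) : π' ≤ pi0 H E := by
  intro ω
  apply le_csInf ⟨1, Set.mem_insert 1 _⟩
  rintro x (rfl | ⟨e, ⟨heH, hne⟩, rfl⟩)
  · exact (hπ'.1 ω).2
  · have h1 : π' ω ≤ poss π' (fun ω => ¬ clauseSat ω e) := le_poss π' hπ'.1 hne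
    have h2 := hπ'.2 e heH
    unfold necCl nec at h2
    simp only
    linarith

lemma pi0_entails (hE : IsValCl E) (e : Clause A) (lam : ℝ) (h0 : 0 < lam)
    (hle : lam ≤ necCl (pi0 H E) e) :
    entails {e' | e' ∈ H ∧ lam ≤ E e'} e := by
  by_contra hcon
  unfold entails at hcon
  push_neg at hcon
  obtain ⟨ω, hsat, hnsat⟩ := hcon
  have hgt : 1 - lam < pi0 H E ω := by
    rcases pi0_mem H E ω with h | ⟨e', ⟨he'H, he'⟩, h⟩
    · rw [h]; linarith
    · rw [← h]
      have : ¬ lam ≤ E e' := fun hc => he' (hsat e' ⟨he'H, hc⟩)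
      push_neg at this
      simp only
      linarith
  have h1 : pi0 H E ω ≤ poss (pi0 H E) (fun ω => ¬ clauseSat ω e) :=
    le_poss _ (pi0_poss H E hE) hnsat
  unfold necCl nec at hle
  linarith

end Pi0

lemma entails_mono {S T : Set (Clause A)} (h : S ⊆ T) {e : Clause A}
    (he : entails S e) : entails T e :=
  fun ω hω => he ω (fun e' he' => hω e' (h he'))

lemma sSup_mono01 {S T : Set ℝ} (h : S ⊆ T) (hT : T ⊆ Set.Icc 0 1) :
    sSup S ≤ sSup T := by
  rcases S.eq_empty_or_nonempty with rfl | hS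
  · rw [Real.sSup_empty]
    rcases T.eq_empty_or_nonempty with rfl | ⟨x, hx⟩
    · rw [Real.sSup_empty]
    · exact le_trans (hT hx).1 (le_csSup ⟨1, fun y hy => (hT hy).2⟩ hx)
  · exact csSup_le_csSup ⟨1, fun y hy => (hT hy).2⟩ hS h

lemma Tw_le_one (P : Set (PClausalRule A)) (V : Clause A → ℝ) (e : Clause A) :
    Tw P V e ≤ 1 :=
  Real.sSup_le (fun _ hx => hx.1.2) one_pos.le

lemma Tw_nonneg (P : Set (PClausalRule A)) (V : Clause A → ℝ) (e : Clause A) :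
    0 ≤ Tw P V e :=
  Real.sSup_nonneg (fun _ hx => hx.1.1)

lemma Tw_isVal (P : Set (PClausalRule A)) (V : Clause A → ℝ) : IsValCl (Tw P V) :=
  fun e => ⟨Tw_nonneg P V e, Tw_le_one P V e⟩

lemma Tw_mono (P : Set (PClausalRule A)) {V W : Clause A → ℝ} (h : ∀ e, V e ≤ W e)
    (e₀ : Clause A) : Tw P V e₀ ≤ Tw P W e₀ := by
  apply sSup_mono01 _ (fun lam hlam => hlam.1)
  rintro lam ⟨hIcc, r, hrP, hw, hh, hb⟩
  refine ⟨hIcc, r, hrP, hw, hh, fun e heB => entails_mono ?_ (hb e heB)⟩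
  intro e' he'
  exact ⟨he'.1, he'.2.trans (h e')⟩

/-- Below any prefixpoint of `Tw P` there is a fixpoint. -/
lemma lfp_le_prefix (P : Set (PClausalRule A)) (V' : Clause A → ℝ) (hV' : IsValCl V')
    (hpre : ∀ e, Tw P V' e ≤ V' e) :
    ∃ W : Clause A → ℝ, IsValCl W ∧ Tw P W = W ∧ ∀ e, W e ≤ V' e := by
  classical
  set Pre : Set (Clause A → ℝ) := {V | IsValCl V ∧ ∀ e, Tw P V e ≤ V e} with hPre
  have hone : (fun _ => (1:ℝ)) ∈ Pre :=
    ⟨fun _ => ⟨zero_le_one, le_rfl⟩, fun e => Tw_le_one P _ e⟩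
  set W : Clause A → ℝ := fun e => sInf ((fun V => V e) '' Pre) with hW
  have hne : ∀ e, ((fun V => V e) '' Pre).Nonempty :=
    fun e => ⟨1, (fun _ => (1:ℝ)), hone, rfl⟩
  have hbdd : ∀ e, BddBelow ((fun V => V e) '' Pre) :=
    fun e => ⟨0, by rintro x ⟨V, hV, rfl⟩; exact (hV.1 e).1⟩
  have hWle : ∀ V ∈ Pre, ∀ e, W e ≤ V e :=
    fun V hV e => csInf_le (hbdd e) ⟨V, hV, rfl⟩
  have hWval : IsValCl W := fun e =>
    ⟨le_csInf (hne e) (by rintro x ⟨V, hV, rfl⟩; exact (hV.1 e).1),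
     hWle _ hone e⟩
  have hTW : ∀ e, Tw P W e ≤ W e := fun e =>
    le_csInf (hne e) (by
      rintro x ⟨V, hV, rfl⟩
      exact le_trans (Tw_mono P (fun e' => hWle V hV e') e) (hV.2 e))
  have hWPre : W ∈ Pre := ⟨hWval, hTW⟩
  have hTWPre : Tw P W ∈ Pre := ⟨Tw_isVal P W, fun e => Tw_mono P hTW e⟩
  refine ⟨W, hWval, funext fun e => le_antisymm (hTW e) (hWle _ hTWPre e),
    fun e => hWle V' ⟨hV', hpre⟩ e⟩

end Aux

/-- for a possibilistic positive clausal program `P` without constraint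
rules, the least fixpoint `E = P*_w` of `T^w_P` (obtained by iterating from the
valuation mapping every clause to 0) is a possibilistic answer set of `P`: the least
specific possibility distribution `π_E` satisfying `{N(e) ≥ E(e) : e ∈ heads(P)}`
belongs to `S^w_P`. -/
theorem stmt8 {A : Type} [Fintype A] (P : Set (PClausalRule A))
    (hP : ∀ r ∈ P, 0 < r.wt ∧ r.wt ≤ 1)
    (hnoconstraint : ∀ r ∈ P, r.head.Nonempty)
    (E : Clause A → ℝ) (hE : IsValCl E)
    (hfix : Tw P E = E)
    (hleast : ∀ V : Clause A → ℝ, IsValCl V → Tw P V = V → ∀ e, E e ≤ V e)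
    (π : PossDist A) (hπ : IsGreatest (valModels (headsOfP P) E) π) :
    MinSpecific (weakModels P) π := by
  classical
  set H : Set (Clause A) := headsOfP P with hH
  have hπd : IsPossDist π := hπ.1.1
  have hπeq : π = pi0 H E :=
    le_antisymm (pi0_ub H E π hπ.1) (hπ.2 (pi0_mem_valModels H E hE))
  constructor
  · -- π ∈ weakModels P
    refine ⟨hπd, fun r hrP => ?_⟩
    unfold weakConstraint
    set lam : ℝ := min (minBodyCl π r.body) r.wt with hlam
    rcases le_or_gt lam 0 with h0 | h0
    · exact h0.trans (necCl_nonneg π hπd r.head)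
    · have hlam1 : lam ≤ 1 := (min_le_right _ _).trans (hP r hrP).2
      have hbdd : BddBelow (insert 1 (necCl π '' (↑r.body : Set (Clause A)))) :=
        (Set.Finite.insert 1 (r.body.finite_toSet.image _)).bddBelow
      have hbody : ∀ e ∈ r.body, lam ≤ necCl π e := by
        intro e heB
        exact (min_le_left _ _).trans (csInf_le hbdd
          (Set.mem_insert_of_mem _ ⟨e, Finset.mem_coe.mpr heB, rfl⟩))
      have hmem : lam ∈ {l | l ∈ Set.Icc (0:ℝ) 1 ∧ ∃ r' ∈ P, l ≤ r'.wt ∧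
          r'.head = r.head ∧ ∀ e ∈ r'.body,
            entails {e' | e' ∈ headsOfP P ∧ l ≤ E e'} e} := by
        refine ⟨⟨h0.le, hlam1⟩, r, hrP, min_le_right _ _, rfl, fun e heB => ?_⟩
        have := hbody e heB
        rw [hπeq] at this
        exact pi0_entails H E hE e lam h0 this
      have hTw : lam ≤ Tw P E r.head :=
        le_csSup ⟨1, fun x hx => hx.1.2⟩ hmem
      rw [hfix] at hTw
      exact hTw.trans (hπ.1.2 r.head ⟨r, hrP, rfl⟩)
  · -- minimal specificity
    intro π' hπ' hle
    have hπ'd : IsPossDist π' := hπ'.1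
    have hV'val : IsValCl (fun e => necCl π' e) :=
      fun e => ⟨necCl_nonneg π' hπ'd e, necCl_le_one π' hπ'd e⟩
    have hpre : ∀ e₀, Tw P (fun e => necCl π' e) e₀ ≤ necCl π' e₀ := by
      intro e₀
      apply Real.sSup_le _ (necCl_nonneg π' hπ'd e₀)
      rintro lam ⟨⟨hl0, hl1⟩, r, hrP, hlw, hhead, hb⟩
      have hwc := hπ'.2 r hrP
      unfold weakConstraint at hwc
      have hmin : lam ≤ minBodyCl π' r.body := by
        apply le_csInf ⟨1, Set.mem_insert 1 _⟩
        rintro x (rfl | ⟨e, heB, rfl⟩)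
        · exact hl1
        · exact le_nec_of_entails π' hπ'd _ e (hb e (Finset.mem_coe.mp heB)) lam hl1
            (fun e' he' => he'.2)
      rw [← hhead]
      exact le_trans (le_min hmin hlw) hwc
    obtain ⟨W, hWval, hWfix, hWle⟩ := lfp_le_prefix P _ hV'val hpre
    have hπ'mem : π' ∈ valModels H E :=
      ⟨hπ'd, fun e _ => (hleast W hWval hWfix e).trans (hWle e)⟩
    exact le_antisymm (hπ.2 hπ'mem) hle


end PASP
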